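/- Let d ≥ 1, let ρ > 0, and let g : ℝ^d → ℝ be ρ-strongly convex. Then for every γ > 0 the Moreau envelope g^γ is ρ/(1 + γρ)-strongly convex, i.e., x ↦ g^γ(x) − (ρ/(2(1 + γρ)))‖x‖² is convex. -/

import Mathlib

/-!
With `h := g - ρ/2 ‖·‖²` convex, completing the square gives
`g^γ(x) - ρ/(2(1+γρ)) ‖x‖² = ⨅ y, (1/γ + ρ)/2 ‖y - (1+γρ)⁻¹ x‖² + h y`.
The integrand is jointly convex in `(x, y)`, and minimizing a jointly convex function over one
variable leaves a convex function of the other. The infima are genuine (not the junk value `0`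
of an unbounded `⨅`) because a convex function on a finite-dimensional space is bounded below
by `a - b ‖y‖`, so the strongly convex `g` is bounded below.
-/

open Set

theorem ConvexOn.iInf_snd {E F : Type*} [AddCommGroup E] [Module ℝ E] [AddCommGroup F]
    [Module ℝ F] {f : E × F → ℝ} (hf : ConvexOn ℝ univ f)
    (hbdd : ∀ x, BddBelow (range fun y => f (x, y))) :
    ConvexOn ℝ univ fun x => ⨅ y, f (x, y) := by
  refine ⟨convex_univ, fun x₁ _ x₂ _ a b ha hb hab => ?_⟩
  simp only [smul_eq_mul, Real.mul_iInf_of_nonneg ha, Real.mul_iInf_of_nonneg hb]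
  refine le_ciInf_add_ciInf fun y₁ y₂ => ?_
  calc ⨅ y, f (a • x₁ + b • x₂, y) ≤ f (a • x₁ + b • x₂, a • y₁ + b • y₂) := ciInf_le (hbdd _) _
    _ = f (a • (x₁, y₁) + b • (x₂, y₂)) := by simp
    _ ≤ a * f (x₁, y₁) + b * f (x₂, y₂) := hf.2 trivial trivial ha hb hab

section Seminormed

variable {E : Type*} [SeminormedAddCommGroup E]

noncomputable def moreauEnvelope (γ : ℝ) (g : E → ℝ) (x : E) : ℝ :=
  ⨅ y, 1 / (2 * γ) * ‖x - y‖ ^ 2 + g y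

theorem moreauEnvelope_bddBelow {γ : ℝ} (hγ : 0 < γ) {g : E → ℝ} (hg : BddBelow (range g)) (x : E) :
    BddBelow (range fun y => 1 / (2 * γ) * ‖x - y‖ ^ 2 + g y) := by
  obtain ⟨m, hm⟩ := hg
  exact ⟨m, by rintro _ ⟨y, rfl⟩; exact le_add_of_nonneg_of_le (by positivity) (hm ⟨y, rfl⟩)⟩

end Seminormed

section Normed

variable {E : Type*} [NormedAddCommGroup E] [NormedSpace ℝ E] {h : E → ℝ}

theorem ConvexOn.sub_mul_norm_le_of_le_on_closedBall (hh : ConvexOn ℝ univ h) {m : ℝ}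
    (hm : ∀ y ∈ Metric.closedBall (0 : E) 1, m ≤ h y) (y : E) :
    m - (h 0 - m) * ‖y‖ ≤ h y := by
  have hm₀ : m ≤ h 0 := hm 0 (Metric.mem_closedBall_self zero_le_one)
  rcases le_or_gt ‖y‖ 1 with hy | hy
  · nlinarith [hm y (mem_closedBall_zero_iff.2 hy), norm_nonneg y]
  set r := ‖y‖
  have hr : 0 < r := one_pos.trans hy
  have hu : r⁻¹ • y ∈ Metric.closedBall (0 : E) 1 := by
    rw [mem_closedBall_zero_iff, norm_smul, norm_inv, norm_norm, inv_mul_cancel₀ hr.ne']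
  have hseg : h (r⁻¹ • y) ≤ r⁻¹ * h y + (1 - r⁻¹) * h 0 := by
    simpa using hh.2 trivial trivial (inv_nonneg.2 hr.le) (sub_nonneg.2 (inv_le_one_of_one_le₀ hy.le))
      (add_sub_cancel _ _) (x := y) (y := 0)
  have key : r * m ≤ h y + (r - 1) * h 0 := by
    have := mul_le_mul_of_nonneg_left ((hm _ hu).trans hseg) hr.le
    linear_combination this + (h y - h 0) * mul_inv_cancel₀ hr.ne'
  linarith

theorem ConvexOn.exists_sub_mul_norm_le [FiniteDimensional ℝ E] (hh : ConvexOn ℝ univ h) :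
    ∃ a b : ℝ, ∀ y, a - b * ‖y‖ ≤ h y := by
  obtain ⟨z, -, hz⟩ := (isCompact_closedBall (0 : E) 1).exists_isMinOn
    (Metric.nonempty_closedBall.2 zero_le_one) ((hh.continuousOn isOpen_univ).mono (subset_univ _))
  exact ⟨h z, h 0 - h z, hh.sub_mul_norm_le_of_le_on_closedBall hz⟩

theorem bddBelow_range_of_convexOn_sub_sq_norm [FiniteDimensional ℝ E] {g : E → ℝ} {ρ : ℝ}
    (hρ : 0 < ρ) (hg : ConvexOn ℝ univ fun x => g x - ρ / 2 * ‖x‖ ^ 2) : BddBelow (range g) := by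
  obtain ⟨a, b, hab⟩ := hg.exists_sub_mul_norm_le
  refine ⟨a - b ^ 2 / (2 * ρ), ?_⟩
  rintro _ ⟨y, rfl⟩
  have hquad : b * ‖y‖ ≤ ρ / 2 * ‖y‖ ^ 2 + b ^ 2 / (2 * ρ) := by
    rw [← sub_nonneg]
    have : ρ / 2 * ‖y‖ ^ 2 + b ^ 2 / (2 * ρ) - b * ‖y‖ = (ρ * ‖y‖ - b) ^ 2 / (2 * ρ) := by
      field_simp; ring
    rw [this]; positivity
  linarith [hab y]

theorem ConvexOn.add_mul_sq_norm_sub_smul (hh : ConvexOn ℝ univ h) {c : ℝ} (hc : 0 ≤ c) (b : ℝ) :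
    ConvexOn ℝ univ fun p : E × E => c * ‖p.2 - b • p.1‖ ^ 2 + h p.2 := by
  have hsq : ConvexOn ℝ univ fun v : E => ‖v‖ ^ 2 :=
    convexOn_univ_norm.pow (fun _ _ => norm_nonneg _) 2
  exact ((hsq.comp_linearMap (LinearMap.snd ℝ E E - b • LinearMap.fst ℝ E E)).smul hc).add
    (hh.comp_linearMap (LinearMap.snd ℝ E E))

end Normed

section InnerProduct

variable {E : Type*} [NormedAddCommGroup E] [InnerProductSpace ℝ E]

theorem norm_sub_sq_complete_square {γ ρ : ℝ} (hγ : γ ≠ 0) (hγρ : 1 + γ * ρ ≠ 0) (x y : E) :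
    1 / (2 * γ) * ‖x - y‖ ^ 2 - ρ / (2 * (1 + γ * ρ)) * ‖x‖ ^ 2 + ρ / 2 * ‖y‖ ^ 2
      = (1 / γ + ρ) / 2 * ‖y - (1 + γ * ρ)⁻¹ • x‖ ^ 2 := by
  rw [norm_sub_sq_real, norm_sub_sq_real, real_inner_smul_right, norm_smul, real_inner_comm,
    mul_pow, Real.norm_eq_abs, sq_abs]
  field_simp
  ring

theorem ConvexOn.moreauEnvelope_sub_sq_norm [FiniteDimensional ℝ E] {g : E → ℝ} {ρ γ : ℝ}
    (hρ : 0 < ρ) (hγ : 0 < γ) (hg : ConvexOn ℝ univ fun x => g x - ρ / 2 * ‖x‖ ^ 2) :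
    ConvexOn ℝ univ fun x => moreauEnvelope γ g x - ρ / (2 * (1 + γ * ρ)) * ‖x‖ ^ 2 := by
  have hγρ : 0 < 1 + γ * ρ := by positivity
  have hbdd := moreauEnvelope_bddBelow hγ (bddBelow_range_of_convexOn_sub_sq_norm hρ hg)
  set F : E × E → ℝ := fun p => (1 / γ + ρ) / 2 * ‖p.2 - (1 + γ * ρ)⁻¹ • p.1‖ ^ 2
    + (g p.2 - ρ / 2 * ‖p.2‖ ^ 2)
  have hF : ∀ x y, F (x, y)
      = 1 / (2 * γ) * ‖x - y‖ ^ 2 + g y - ρ / (2 * (1 + γ * ρ)) * ‖x‖ ^ 2 := fun x y => by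
    linear_combination -norm_sub_sq_complete_square hγ.ne' hγρ.ne' x y
  have hF_bdd : ∀ x, BddBelow (range fun y => F (x, y)) := fun x => by
    obtain ⟨m, hm⟩ := hbdd x
    refine ⟨m - ρ / (2 * (1 + γ * ρ)) * ‖x‖ ^ 2, ?_⟩
    rintro _ ⟨y, rfl⟩
    linarith [hF x y, hm (mem_range_self y)]
  have hconv : ConvexOn ℝ univ F := hg.add_mul_sq_norm_sub_smul (by positivity) _
  convert hconv.iInf_snd hF_bdd using 2 with x
  rw [moreauEnvelope, ciInf_sub (hbdd x)]
  simp only [hF]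

end InnerProduct

theorem moreau_envelope_strongly_convex_general (d : ℕ) (ρ : ℝ) (hρ : 0 < ρ)
    (g : EuclideanSpace ℝ (Fin d) → ℝ)
    (hstrong : ConvexOn ℝ Set.univ (fun x => g x - ρ / 2 * ‖x‖ ^ 2)) :
    ∀ γ : ℝ, 0 < γ →
      ConvexOn ℝ Set.univ
        (fun x : EuclideanSpace ℝ (Fin d) =>
          (⨅ y : EuclideanSpace ℝ (Fin d), 1 / (2 * γ) * ‖x - y‖ ^ 2 + g y)
            - ρ / (2 * (1 + γ * ρ)) * ‖x‖ ^ 2) :=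
  fun _ hγ => hstrong.moreauEnvelope_sub_sq_norm hρ hγ

/-- For `g` ρ-strongly convex, for every `γ > 0` the Moreau envelope
`g^γ` is `ρ/(1 + γρ)`-strongly convex. -/
theorem moreau_envelope_strongly_convex (d : ℕ) (hd : 1 ≤ d) (ρ : ℝ) (hρ : 0 < ρ)
    (g : EuclideanSpace ℝ (Fin d) → ℝ)
    (hstrong : ConvexOn ℝ Set.univ (fun x => g x - ρ / 2 * ‖x‖ ^ 2)) :
    ∀ γ : ℝ, 0 < γ →
      ConvexOn ℝ Set.univ
        (fun x : EuclideanSpace ℝ (Fin d) =>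
          (⨅ y : EuclideanSpace ℝ (Fin d), 1 / (2 * γ) * ‖x - y‖ ^ 2 + g y)
            - ρ / (2 * (1 + γ * ρ)) * ‖x‖ ^ 2) :=
  moreau_envelope_strongly_convex_general d ρ hρ g hstrong
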